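/- In the softmax choice model with linear utilities, two parameter vectors θ_1, θ_2 produce identical choice probabilities for all feature configurations if and only if θ_1ᵀ(I_k - I_K) = θ_2ᵀ(I_k - I_K) for all arms k and all feature vectors; consequently, if the matrix whose rows are the difference vectors (I_{k,t} - I_{K,t})ᵀ over k = 1,...,K-1 and t = 1,...,T has full column rank d, then θ_1 = θ_2. -/
import Mathlib


open Matrix

/-- Identifiability of the softmax choice model with linear utilities.
There are K+1 arms (Fin (K+1)), with the last arm as base. Two parameter vectors give
identical choice probabilities for all arms and rounds iff their inner products with all
feature differences (relative to the base arm) agree; consequently, if the design matrix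
stacking the difference rows has full column rank (its associated linear map is injective),
then equal choice probabilities imply θ₁ = θ₂. -/
theorem softmax_identifiability (d K T : ℕ)
    (I : Fin T → Fin (K + 1) → (Fin d → ℝ)) (θ₁ θ₂ : Fin d → ℝ)
    (X : Matrix (Fin T × Fin K) (Fin d) ℝ)
    (hX : ∀ t k, X (t, k) = I t k.castSucc - I t (Fin.last K)) :
    ((∀ t k, Real.exp (θ₁ ⬝ᵥ I t k) / (∑ k', Real.exp (θ₁ ⬝ᵥ I t k')) =
        Real.exp (θ₂ ⬝ᵥ I t k) / (∑ k', Real.exp (θ₂ ⬝ᵥ I t k'))) ↔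
      (∀ t (k : Fin (K + 1)), θ₁ ⬝ᵥ (I t k - I t (Fin.last K)) =
        θ₂ ⬝ᵥ (I t k - I t (Fin.last K)))) ∧
    (Function.Injective X.mulVec →
      (∀ t k, Real.exp (θ₁ ⬝ᵥ I t k) / (∑ k', Real.exp (θ₁ ⬝ᵥ I t k')) =
        Real.exp (θ₂ ⬝ᵥ I t k) / (∑ k', Real.exp (θ₂ ⬝ᵥ I t k'))) →
      θ₁ = θ₂) := by
  have hpos : ∀ (θ : Fin d → ℝ) (t : Fin T), 0 < ∑ k', Real.exp (θ ⬝ᵥ I t k') := by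
    intro θ t
    exact Finset.sum_pos (fun k _ => Real.exp_pos _) Finset.univ_nonempty
  have main : (∀ t k, Real.exp (θ₁ ⬝ᵥ I t k) / (∑ k', Real.exp (θ₁ ⬝ᵥ I t k')) =
        Real.exp (θ₂ ⬝ᵥ I t k) / (∑ k', Real.exp (θ₂ ⬝ᵥ I t k'))) ↔
      (∀ t (k : Fin (K + 1)), θ₁ ⬝ᵥ (I t k - I t (Fin.last K)) =
        θ₂ ⬝ᵥ (I t k - I t (Fin.last K))) := by
    constructor
    · intro h t k
      have h1 := h t k
      have h2 := h t (Fin.last K)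
      have S1 := (hpos θ₁ t).ne'
      have S2 := (hpos θ₂ t).ne'
      rw [div_eq_div_iff (hpos θ₁ t).ne' (hpos θ₂ t).ne'] at h1 h2
      have key : Real.exp (θ₁ ⬝ᵥ I t k + θ₂ ⬝ᵥ I t (Fin.last K)) =
          Real.exp (θ₂ ⬝ᵥ I t k + θ₁ ⬝ᵥ I t (Fin.last K)) := by
        rw [Real.exp_add, Real.exp_add]
        have hS : (0:ℝ) < (∑ k', Real.exp (θ₁ ⬝ᵥ I t k')) * (∑ k', Real.exp (θ₂ ⬝ᵥ I t k')) :=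
          mul_pos (hpos θ₁ t) (hpos θ₂ t)
        refine mul_right_cancel₀ hS.ne' ?_
        calc Real.exp (θ₁ ⬝ᵥ I t k) * Real.exp (θ₂ ⬝ᵥ I t (Fin.last K)) *
              ((∑ k', Real.exp (θ₁ ⬝ᵥ I t k')) * (∑ k', Real.exp (θ₂ ⬝ᵥ I t k')))
            = (Real.exp (θ₁ ⬝ᵥ I t k) * (∑ k', Real.exp (θ₂ ⬝ᵥ I t k'))) *
              (Real.exp (θ₂ ⬝ᵥ I t (Fin.last K)) * (∑ k', Real.exp (θ₁ ⬝ᵥ I t k'))) := by ring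
          _ = (Real.exp (θ₂ ⬝ᵥ I t k) * (∑ k', Real.exp (θ₁ ⬝ᵥ I t k'))) *
              (Real.exp (θ₁ ⬝ᵥ I t (Fin.last K)) * (∑ k', Real.exp (θ₂ ⬝ᵥ I t k'))) := by
              rw [h1, ← h2]
          _ = Real.exp (θ₂ ⬝ᵥ I t k) * Real.exp (θ₁ ⬝ᵥ I t (Fin.last K)) *
              ((∑ k', Real.exp (θ₁ ⬝ᵥ I t k')) * (∑ k', Real.exp (θ₂ ⬝ᵥ I t k'))) := by ring
      have := Real.exp_injective key
      simp only [dotProduct_sub]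
      linarith
    · intro h t k
      have key : ∀ (θ : Fin d → ℝ),
          Real.exp (θ ⬝ᵥ I t k) / (∑ k', Real.exp (θ ⬝ᵥ I t k')) =
          Real.exp (θ ⬝ᵥ I t k - θ ⬝ᵥ I t (Fin.last K)) /
            (∑ k', Real.exp (θ ⬝ᵥ I t k' - θ ⬝ᵥ I t (Fin.last K))) := by
        intro θ
        have hpos2 : 0 < ∑ k', Real.exp (θ ⬝ᵥ I t k' - θ ⬝ᵥ I t (Fin.last K)) :=
          Finset.sum_pos (fun k _ => Real.exp_pos _) Finset.univ_nonempty
        rw [div_eq_div_iff (hpos θ t).ne' hpos2.ne', Finset.mul_sum, Finset.mul_sum]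
        apply Finset.sum_congr rfl
        intro k' _
        rw [← Real.exp_add, ← Real.exp_add]
        ring_nf
      have hdk : ∀ (k' : Fin (K+1)), θ₁ ⬝ᵥ I t k' - θ₁ ⬝ᵥ I t (Fin.last K) =
          θ₂ ⬝ᵥ I t k' - θ₂ ⬝ᵥ I t (Fin.last K) := by
        intro k'
        have := h t k'
        simpa [dotProduct_sub] using this
      rw [key θ₁, key θ₂, hdk k]
      congr 1
      exact Finset.sum_congr rfl (fun k' _ => by rw [hdk k'])
  refine ⟨main, fun hinj hprob => ?_⟩
  have hd := main.mp hprob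
  apply hinj
  funext p
  obtain ⟨t, k⟩ := p
  have e : ∀ θ : Fin d → ℝ, X.mulVec θ (t, k) = θ ⬝ᵥ (I t k.castSucc - I t (Fin.last K)) := by
    intro θ
    rw [show X.mulVec θ (t, k) = X (t, k) ⬝ᵥ θ from rfl, hX, dotProduct_comm]
  rw [e, e]
  exact hd t k.castSucc
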